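/- Let f : ℝ^d → ℝ^ℓ be a measurable and locally bounded function. Then for all x ∈ ℝ^d, F_f(x) = ⋂_{f̃ = f a.e.} ⋂_{δ>0} clco f̃(B_δ(x)), where the first intersection is taken over all functions f̃ : ℝ^d → ℝ^ℓ equal to f Lebesgue-almost everywhere. -/

import Mathlib

open MeasureTheory Metric Filter Set Topology

noncomputable section

/-- `ℝ^n` with the Euclidean structure. -/
abbrev Euc (n : ℕ) : Type := EuclideanSpace ℝ (Fin n)

/-- Closed convex hull of a set. -/
def clco {n : ℕ} (A : Set (Euc n)) : Set (Euc n) := closure (convexHull ℝ A)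

/-- A function is locally bounded. -/
def LocBdd {d l : ℕ} (f : Euc d → Euc l) : Prop :=
  ∀ x : Euc d, ∃ δ > (0 : ℝ), ∃ C : ℝ, ∀ y ∈ Metric.ball x δ, ‖f y‖ ≤ C

/-- The Filippov regularization of `f`. -/
def FilippovReg {d l : ℕ} (f : Euc d → Euc l) (x : Euc d) : Set (Euc l) :=
  ⋂ (N : Set (Euc d)) (_ : volume N = 0) (δ : ℝ) (_ : 0 < δ),
    clco (f '' (Metric.ball x δ \ N))

/-- The Krasovskii regularization of `f`. -/
def KrasovskiiReg {d l : ℕ} (f : Euc d → Euc l) (x : Euc d) : Set (Euc l) :=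
  ⋂ (δ : ℝ) (_ : 0 < δ), clco (f '' Metric.ball x δ)

/-- A set-valued map is cusco: upper semicontinuous with nonempty compact convex values. -/
def IsCusco {d l : ℕ} (Φ : Euc d → Set (Euc l)) : Prop :=
  (∀ x : Euc d, ∀ U : Set (Euc l), IsOpen U → Φ x ⊆ U →
      ∃ δ > (0 : ℝ), ∀ y ∈ Metric.ball x δ, Φ y ⊆ U) ∧
  ∀ x : Euc d, (Φ x).Nonempty ∧ IsCompact (Φ x) ∧ Convex ℝ (Φ x)

/-- The "minimal" map `m(Φ)` associated to a set-valued map `Φ`. -/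
def mPhi {d l : ℕ} (Φ : Euc d → Set (Euc l)) (x : Euc d) : Set (Euc l) :=
  ⋂ (N : Set (Euc d)) (_ : volume N = 0) (δ : ℝ) (_ : 0 < δ),
    clco (⋃ a ∈ Metric.ball x δ \ N, Φ a)

/-- A point of approximate continuity of `f`. -/
def ApproxContAt {d l : ℕ} (f : Euc d → Euc l) (x : Euc d) : Prop :=
  ∀ ε > (0 : ℝ),
    Tendsto (fun δ : ℝ =>
        volume {y ∈ Metric.ball x δ | ε ≤ ‖f y - f x‖} / volume (Metric.ball x δ))
      (𝓝[>] 0) (𝓝 0)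

/-- A cusco map is Filippov representable if it is the Filippov regularization
of some locally bounded measurable function. -/
def FilippovRepresentable {d l : ℕ} (Φ : Euc d → Set (Euc l)) : Prop :=
  ∃ f : Euc d → Euc l, Measurable f ∧ LocBdd f ∧ ∀ x, Φ x = FilippovReg f x

/-!
An a.e. modification `f̃` of `f` agrees with `f` off the null set `{f̃ ≠ f}`, so
`f '' (B \ {f̃ ≠ f}) ⊆ f̃ '' B` for every ball `B`. Conversely, for a null set `N` the set
`B \ N` is nonempty because balls have positive measure; redefining `f` on `N` as the constant
`f z` for some `z ∈ B \ N` gives an a.e. modification `f̃` with `f̃ '' B ⊆ f '' (B \ N)`.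
Taking closed convex hulls yields the two inclusions.
-/

theorem image_diff_setOf_ne_subset_image {α β : Type*} (f g : α → β) (s : Set α) :
    f '' (s \ {y | g y ≠ f y}) ⊆ g '' s := by
  rintro _ ⟨y, ⟨hys, hy⟩, rfl⟩
  exact ⟨y, hys, not_not.mp hy⟩

section AEModification

variable {α β : Type*} [MeasurableSpace α] {μ : Measure α}

theorem exists_ae_eq_image_subset_image_diff (f : α → β) {s N : Set α} (hN : μ N = 0)
    (hsN : (s \ N).Nonempty) : ∃ g : α → β, g =ᵐ[μ] f ∧ g '' s ⊆ f '' (s \ N) := by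
  classical
  obtain ⟨z, hz⟩ := hsN
  refine ⟨N.piecewise (fun _ ↦ f z) f, ?_, ?_⟩
  · filter_upwards [measure_eq_zero_iff_ae_notMem.mp hN] with y hy
    exact N.piecewise_eq_of_notMem _ _ hy
  · rintro _ ⟨y, hys, rfl⟩
    by_cases hy : y ∈ N
    · exact ⟨z, hz, (N.piecewise_eq_of_mem (fun _ ↦ f z) f hy).symm⟩
    · exact ⟨y, ⟨hys, hy⟩, (N.piecewise_eq_of_notMem (fun _ ↦ f z) f hy).symm⟩

theorem IsOpen.diff_nonempty_of_measure_zero [TopologicalSpace α] [μ.IsOpenPosMeasure]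
    {U N : Set α} (hU : IsOpen U) (hne : U.Nonempty) (hN : μ N = 0) : (U \ N).Nonempty := by
  apply nonempty_of_measure_ne_zero (μ := μ)
  rw [measure_sdiff_null hN]
  exact (hU.measure_pos μ hne).ne'

end AEModification

theorem clco_mono {n : ℕ} {A B : Set (Euc n)} (h : A ⊆ B) : clco A ⊆ clco B :=
  closure_mono (convexHull_mono h)

theorem filippovReg_eq_iInter_ae_modifications_general (d l : ℕ) (f : Euc d → Euc l) :
    ∀ x : Euc d, FilippovReg f x =
      ⋂ (ftil : Euc d → Euc l) (_ : ftil =ᵐ[volume] f) (δ : ℝ) (_ : 0 < δ),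
        clco (ftil '' Metric.ball x δ) := by
  intro x
  ext v
  simp only [FilippovReg, mem_iInter]
  constructor
  · intro hv g hg δ hδ
    exact clco_mono (image_diff_setOf_ne_subset_image f g _) (hv _ (ae_iff.mp hg) δ hδ)
  · intro hv N hN δ hδ
    obtain ⟨g, hg, hsub⟩ := exists_ae_eq_image_subset_image_diff f hN
      (isOpen_ball.diff_nonempty_of_measure_zero (nonempty_ball.2 hδ) hN)
    exact clco_mono hsub (hv g hg δ hδ)

/-- Proposition (vi): `F_f` equals the intersection, over all functions `f̃`
equal to `f` almost everywhere, of the Krasovskii-type regularizations of `f̃`. -/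
theorem filippovReg_eq_iInter_ae_modifications (d l : ℕ) (f : Euc d → Euc l)
    (hmeas : Measurable f) (hbdd : LocBdd f) :
    ∀ x : Euc d, FilippovReg f x =
      ⋂ (ftil : Euc d → Euc l) (_ : ftil =ᵐ[volume] f) (δ : ℝ) (_ : 0 < δ),
        clco (ftil '' Metric.ball x δ) :=
  filippovReg_eq_iInter_ae_modifications_general d l f
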